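/- No measurement distinguishes the class of pure product states from the class of maximally entangled states better than random guessing in the following sense: for any two-outcome POVM {M₀, M₁} on H ⊗ H (H = ℂ^d), max over product states ρ ∈ H₀ of tr(M₁ρ) plus max over maximally entangled states σ ∈ H₁ of tr(M₀σ) is at least 1. Equivalently, if the worst-case error on maximally entangled states is at most δ, then the worst-case error on product states is at least 1 − δ. -/

import Mathlib

open ComplexOrder Matrix

noncomputable def nmdZeta (d : ℕ) : ℂ := Complex.exp (2 * Real.pi * Complex.I / d)

lemma nmd_prim (d : ℕ) (hd : 0 < d) : IsPrimitiveRoot (nmdZeta d) d :=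
  Complex.isPrimitiveRoot_exp d hd.ne'

lemma nmd_abs (d : ℕ) (hd : 0 < d) : ‖nmdZeta d‖ = 1 := by
  have h1 : (‖nmdZeta d‖) ^ d = 1 := by
    rw [← norm_pow, (nmd_prim d hd).pow_eq_one, norm_one]
  have hx : 0 ≤ ‖nmdZeta d‖ := norm_nonneg _
  rcases lt_trichotomy (‖nmdZeta d‖) 1 with hlt | he | hgt
  · have := pow_lt_one₀ hx hlt hd.ne'; linarith
  · exact he
  · have := one_lt_pow₀ hgt hd.ne'; linarith

lemma nmd_conj_mul (d : ℕ) (hd : 0 < d) (k : ℕ) :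
    (starRingEnd ℂ) (nmdZeta d ^ k) * nmdZeta d ^ k = 1 := by
  rw [mul_comm, Complex.mul_conj]
  norm_cast
  rw [map_pow Complex.normSq]
  have : Complex.normSq (nmdZeta d) = 1 := by
    rw [← Complex.sq_norm, nmd_abs d hd]; norm_num
  simp [this]

lemma nmd_conj_mul' (d : ℕ) (hd : 0 < d) (k : ℕ) :
    ((starRingEnd ℂ) (nmdZeta d)) ^ k * nmdZeta d ^ k = 1 := by
  rw [← map_pow]; exact nmd_conj_mul d hd k

lemma nmd_ne_zero (d : ℕ) (hd : 0 < d) : nmdZeta d ≠ 0 := Complex.exp_ne_zero _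

/-- character orthogonality -/
lemma nmd_char_sum (d : ℕ) (hd : 0 < d) (p q : Fin d) :
    ∑ a : Fin d, nmdZeta d ^ (a.val * q.val) * (starRingEnd ℂ) (nmdZeta d ^ (a.val * p.val)) =
    if p = q then (d : ℂ) else 0 := by
  set z := nmdZeta d with hz
  have hz0 : z ≠ 0 := nmd_ne_zero d hd
  have hconj : (starRingEnd ℂ) z = z⁻¹ := by
    have h := nmd_conj_mul d hd 1
    simp only [pow_one] at h
    field_simp [hz0] at h ⊢
    linear_combination h
  set w : ℂ := z ^ ((q.val : ℤ) - (p.val : ℤ)) with hw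
  have hterm : ∀ a : Fin d, z ^ (a.val * q.val) * (starRingEnd ℂ) (z ^ (a.val * p.val)) = w ^ a.val := by
    intro a
    rw [map_pow, hconj, hw, inv_pow, ← zpow_natCast z (a.val * q.val),
      ← zpow_natCast z (a.val * p.val), ← _root_.zpow_neg, ← zpow_add₀ hz0,
      ← zpow_natCast (z ^ ((q.val : ℤ) - (p.val : ℤ))) a.val, ← _root_.zpow_mul]
    congr 1
    push_cast
    ring
  rw [Finset.sum_congr rfl (fun a _ => hterm a), Fin.sum_univ_eq_sum_range (fun i => w ^ i)]
  by_cases hpq : p = q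
  · subst hpq
    have : w = 1 := by rw [hw]; simp
    simp [this]
  · rw [if_neg hpq]
    have hw1 : w ≠ 1 := by
      intro h
      rw [hw, (nmd_prim d hd).zpow_eq_one_iff_dvd] at h
      have habs : |(q.val : ℤ) - (p.val : ℤ)| < (d : ℤ) := by
        have h1 := q.isLt; have h2 := p.isLt
        rw [abs_lt]; omega
      have := Int.eq_zero_of_abs_lt_dvd h habs
      exact hpq (Fin.ext (by omega))
    rw [geom_sum_eq hw1]
    have hwd : w ^ d = 1 := by
      rw [hw, ← zpow_natCast (z ^ ((q.val : ℤ) - (p.val : ℤ))) d, ← _root_.zpow_mul,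
        mul_comm, _root_.zpow_mul, zpow_natCast, (nmd_prim d hd).pow_eq_one, _root_.one_zpow]
    rw [hwd]
    simp

lemma nmd_char_sum' (d : ℕ) (hd : 0 < d) (p q : Fin d) :
    ∑ a : Fin d, nmdZeta d ^ (a.val * q.val) * ((starRingEnd ℂ) (nmdZeta d)) ^ (a.val * p.val) =
    if p = q then (d : ℂ) else 0 := by
  simpa only [map_pow] using nmd_char_sum d hd p q

lemma nmd_trace_mul_vecMulVec {n : Type*} [Fintype n] (M : Matrix n n ℂ) (u : n → ℂ) :
    (M * vecMulVec u (star u)).trace = ∑ p, ∑ q, M p q * (u q * (starRingEnd ℂ) (u p)) := by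
  simp [Matrix.trace, Matrix.mul_apply, vecMulVec_apply, Matrix.diag, mul_assoc]

/-- no two-outcome POVM {M₀,M₁} on ℂ^d ⊗ ℂ^d distinguishes product
states from maximally entangled states better than random guessing: if the error
probability tr(M₁ρ) is at most c₁ on all product states ρ and the error probability
tr(M₀σ) is at most c₀ on all maximally entangled states σ, then c₀ + c₁ ≥ 1. -/
theorem no_measurement_distinguishes_product_from_entangled (d : ℕ) (hd : 0 < d)
    (M₀ M₁ : Matrix (Fin d × Fin d) (Fin d × Fin d) ℂ)
    (h0 : M₀.PosSemidef) (h1 : M₁.PosSemidef) (hsum : M₀ + M₁ = 1)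
    (c₀ c₁ : ℝ)
    (hprod : ∀ ψ φ : Fin d → ℂ, star ψ ⬝ᵥ ψ = 1 → star φ ⬝ᵥ φ = 1 →
      ((M₁ * vecMulVec (fun p : Fin d × Fin d => ψ p.1 * φ p.2) (star fun p : Fin d × Fin d => ψ p.1 * φ p.2)).trace).re ≤ c₁)
    (hent : ∀ (α : Fin d → ℂ) (e f : Fin d → Fin d → ℂ),
      (∀ i j, star (e i) ⬝ᵥ e j = if i = j then 1 else 0) →
      (∀ i j, star (f i) ⬝ᵥ f j = if i = j then 1 else 0) →
      (∀ i, ‖α i‖ ^ 2 = 1 / d) →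
      ((M₀ * vecMulVec (fun p : Fin d × Fin d => ∑ i, α i * e i p.1 * f i p.2)
          (star fun p : Fin d × Fin d => ∑ i, α i * e i p.1 * f i p.2)).trace).re ≤ c₀) :
    1 ≤ c₀ + c₁ := by
  haveI : NeZero d := ⟨hd.ne'⟩
  set z := nmdZeta d with hzdef
  -- Part 1: product states give trace M₁ ≤ d² c₁
  have part1 : (M₁.trace).re ≤ (d:ℝ)^2 * c₁ := by
    have key : ∀ ab : Fin d × Fin d, (M₁ ab ab).re ≤ c₁ := by
      rintro ⟨a, b⟩
      have hψ : star (Pi.single a (1:ℂ) : Fin d → ℂ) ⬝ᵥ (Pi.single a (1:ℂ) : Fin d → ℂ) = 1 := by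
        simp [dotProduct, Pi.single_apply, apply_ite]
      have hφ : star (Pi.single b (1:ℂ) : Fin d → ℂ) ⬝ᵥ (Pi.single b (1:ℂ) : Fin d → ℂ) = 1 := by
        simp [dotProduct, Pi.single_apply, apply_ite]
      have h := hprod (Pi.single a 1) (Pi.single b 1) hψ hφ
      rw [nmd_trace_mul_vecMulVec] at h
      have hu : ∀ q : Fin d × Fin d,
          ((Pi.single a (1:ℂ) : Fin d → ℂ) q.1 * (Pi.single b (1:ℂ) : Fin d → ℂ) q.2)
            = if q = (a, b) then 1 else 0 := by
        rintro ⟨q1, q2⟩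
        by_cases h1 : q1 = a <;> by_cases h2 : q2 = b <;>
          simp [Pi.single_apply, h1, h2, Prod.ext_iff]
      simp only [hu] at h
      calc (M₁ (a,b) (a,b)).re
          = ((∑ p, ∑ q, M₁ p q *
              ((if q = (a,b) then (1:ℂ) else 0) * (starRingEnd ℂ) (if p = (a,b) then 1 else 0)))).re := by
            congr 1
            rw [Finset.sum_eq_single (a,b)]
            · rw [Finset.sum_eq_single (a,b)] <;> simp +contextual
            · intro p _ hp
              apply Finset.sum_eq_zero
              intro q _
              simp [hp]
            · simp
        _ ≤ c₁ := h
    have : M₁.trace = ∑ ab : Fin d × Fin d, M₁ ab ab := rfl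
    rw [this, Complex.re_sum]
    calc ∑ ab : Fin d × Fin d, (M₁ ab ab).re ≤ ∑ _ab : Fin d × Fin d, c₁ :=
          Finset.sum_le_sum (fun ab _ => key ab)
      _ = (d:ℝ)^2 * c₁ := by
          rw [Finset.sum_const, Finset.card_univ, Fintype.card_prod, Fintype.card_fin,
            nsmul_eq_mul]
          push_cast; ring
  -- Part 2: entangled states give trace M₀ ≤ d² c₀
  have part2 : (M₀.trace).re ≤ (d:ℝ)^2 * c₀ := by
    set s : ℝ := (Real.sqrt d)⁻¹ with hs
    have hsr : s^2 = (d:ℝ)⁻¹ := by rw [hs, inv_pow, Real.sq_sqrt (by positivity)]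
    have hsd : (s:ℂ)^2 = (d:ℂ)⁻¹ := by
      rw [← Complex.ofReal_pow, hsr, Complex.ofReal_inv]
      norm_num
    -- the Bell state vector for parameters (a, b)
    set u : Fin d → Fin d → Fin d × Fin d → ℂ :=
      fun a b q => (s:ℂ) * (z ^ (a.val * q.1.val) * if q.2 = q.1 + b then 1 else 0) with hudef
    have key : ∀ a b : Fin d,
        ((M₀ * vecMulVec (u a b) (star (u a b))).trace).re ≤ c₀ := by
      intro a b
      set ev : Fin d → Fin d → ℂ := fun i x => if x = i then z ^ (a.val * i.val) else 0 with hev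
      set fv : Fin d → Fin d → ℂ := fun i x => if x = i + b then 1 else 0 with hfv
      set av : Fin d → ℂ := fun _ => (s:ℂ) with hav
      have he : ∀ i j, star (ev i) ⬝ᵥ ev j = if i = j then 1 else 0 := by
        intro i j
        simp only [dotProduct, Pi.star_apply, hev]
        by_cases hij : i = j
        · subst hij
          rw [Finset.sum_eq_single i]
          · simp [hzdef, nmd_conj_mul' d hd]
          · intro x _ hx; simp [hx]
          · simp
        · rw [if_neg hij]
          apply Finset.sum_eq_zero
          intro x _
          by_cases h2 : x = j
          · have h1 : ¬ x = i := fun h => hij (h.symm.trans h2)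
            simp [h1]
          · simp [h2]
      have hf : ∀ i j, star (fv i) ⬝ᵥ fv j = if i = j then 1 else 0 := by
        intro i j
        simp only [dotProduct, Pi.star_apply, hfv]
        by_cases hij : i = j
        · subst hij
          rw [Finset.sum_eq_single (i + b)] <;> simp +contextual
        · rw [if_neg hij]
          apply Finset.sum_eq_zero
          intro x _
          by_cases h2 : x = j + b
          · have h1 : ¬ x = i + b := fun h => hij (add_right_cancel (h.symm.trans h2))
            simp [h1]
          · simp [h2]
      have ha : ∀ i : Fin d, ‖av i‖ ^ 2 = 1 / d := by
        intro i
        simp only [hav, Complex.norm_real, Real.norm_eq_abs]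
        rw [abs_of_nonneg (by positivity), hs]
        rw [inv_pow, Real.sq_sqrt (by positivity)]
        simp
      have h := hent av ev fv he hf ha
      have huv : (fun p : Fin d × Fin d => ∑ i, av i * ev i p.1 * fv i p.2) = u a b := by
        funext q
        rw [hudef]
        simp only [hav, hev, hfv]
        rw [Finset.sum_eq_single q.1]
        · simp [mul_assoc]
        · intro x _ hx; simp [Ne.symm hx]
        · simp
      rwa [huv] at h
    -- sum over a b of the traces equals trace M₀
    have main : ∑ a : Fin d, ∑ b : Fin d,
        (M₀ * vecMulVec (u a b) (star (u a b))).trace = M₀.trace := by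
      have hT : ∀ p q : Fin d × Fin d,
          ∑ a : Fin d, ∑ b : Fin d, (u a b q * (starRingEnd ℂ) (u a b p)) =
          if p = q then 1 else 0 := by
        intro p q
        have hterm : ∀ a b : Fin d, u a b q * (starRingEnd ℂ) (u a b p) =
            (s:ℂ)^2 * ((z ^ (a.val * q.1.val) * ((starRingEnd ℂ) z) ^ (a.val * p.1.val)) *
              ((if q.2 = q.1 + b then 1 else 0) * (if p.2 = p.1 + b then 1 else 0))) := by
          intro a b
          rw [hudef]
          simp only [_root_.map_mul, Complex.conj_ofReal, map_pow,
            apply_ite (starRingEnd ℂ), _root_.map_one, _root_.map_zero]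
          ring
        have hbsum : ∀ a : Fin d, ∑ b : Fin d,
            (s:ℂ)^2 * ((z ^ (a.val * q.1.val) * ((starRingEnd ℂ) z) ^ (a.val * p.1.val)) *
              ((if q.2 = q.1 + b then 1 else 0) * (if p.2 = p.1 + b then 1 else 0))) =
            ((s:ℂ)^2 * (if p.2 = p.1 + (q.2 - q.1) then 1 else 0)) *
              (z ^ (a.val * q.1.val) * ((starRingEnd ℂ) z) ^ (a.val * p.1.val)) := by
          intro a
          have hin : ∑ b : Fin d,
              ((if q.2 = q.1 + b then (1:ℂ) else 0) * (if p.2 = p.1 + b then 1 else 0)) =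
              (if p.2 = p.1 + (q.2 - q.1) then 1 else 0) := by
            rw [Finset.sum_eq_single (q.2 - q.1)]
            · simp [add_sub_cancel]
            · intro b _ hb
              have : ¬ (q.2 = q.1 + b) := by
                intro hq
                exact hb (by rw [hq]; exact (add_sub_cancel_left q.1 b).symm ▸ rfl)
              simp [this]
            · simp
          calc ∑ b : Fin d,
              (s:ℂ)^2 * ((z ^ (a.val * q.1.val) * ((starRingEnd ℂ) z) ^ (a.val * p.1.val)) *
                ((if q.2 = q.1 + b then 1 else 0) * (if p.2 = p.1 + b then 1 else 0)))
              = ((s:ℂ)^2 * (z ^ (a.val * q.1.val) * ((starRingEnd ℂ) z) ^ (a.val * p.1.val))) *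
                ∑ b : Fin d, ((if q.2 = q.1 + b then (1:ℂ) else 0) * (if p.2 = p.1 + b then 1 else 0)) := by
                rw [Finset.mul_sum]
                exact Finset.sum_congr rfl (fun b _ => by ring)
            _ = _ := by rw [hin]; ring
        rw [Finset.sum_congr rfl (fun a _ => Finset.sum_congr rfl (fun b _ => hterm a b)),
          Finset.sum_congr rfl (fun a _ => hbsum a), ← Finset.mul_sum,
          nmd_char_sum' d hd p.1 q.1, hsd]
        by_cases hpq : p = q
        · subst hpq
          have hc : p.1 + (p.2 - p.1) = p.2 := by rw [add_comm, sub_add_cancel]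
          simp [hc, (Nat.cast_ne_zero (R := ℂ)).mpr hd.ne']
        · rw [if_neg hpq]
          by_cases h1 : p.1 = q.1
          · have h2 : p.2 ≠ q.2 := fun h2 => hpq (Prod.ext h1 h2)
            have hc : q.1 + (q.2 - q.1) = q.2 := by rw [add_comm, sub_add_cancel]
            simp [h1, h2, hc]
          · simp [h1]
      calc ∑ a : Fin d, ∑ b : Fin d, (M₀ * vecMulVec (u a b) (star (u a b))).trace
          = ∑ a : Fin d, ∑ b : Fin d, ∑ p, ∑ q, M₀ p q * (u a b q * (starRingEnd ℂ) (u a b p)) := by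
            simp_rw [nmd_trace_mul_vecMulVec]
        _ = ∑ p, ∑ q, M₀ p q * ∑ a : Fin d, ∑ b : Fin d, (u a b q * (starRingEnd ℂ) (u a b p)) := by
            rw [Finset.sum_congr rfl (fun a _ => Finset.sum_comm (s := Finset.univ) (t := Finset.univ)
                (f := fun b p => ∑ q, M₀ p q * (u a b q * (starRingEnd ℂ) (u a b p))))]
            rw [Finset.sum_comm]
            refine Finset.sum_congr rfl (fun p _ => ?_)
            rw [Finset.sum_congr rfl (fun a _ => Finset.sum_comm (s := Finset.univ) (t := Finset.univ)
                (f := fun b q => M₀ p q * (u a b q * (starRingEnd ℂ) (u a b p))))]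
            rw [Finset.sum_comm]
            refine Finset.sum_congr rfl (fun q _ => ?_)
            simp_rw [← Finset.mul_sum]
        _ = ∑ p, M₀ p p := by
            apply Finset.sum_congr rfl
            intro p _
            rw [Finset.sum_eq_single p]
            · rw [hT p p]; simp
            · intro q _ hq; rw [hT p q, if_neg (Ne.symm hq)]; simp
            · simp
        _ = M₀.trace := rfl
    have : (M₀.trace).re = ∑ a : Fin d, ∑ b : Fin d,
        ((M₀ * vecMulVec (u a b) (star (u a b))).trace).re := by
      rw [← main]
      simp [Complex.re_sum]
    rw [this]
    calc ∑ a : Fin d, ∑ b : Fin d, ((M₀ * vecMulVec (u a b) (star (u a b))).trace).re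
        ≤ ∑ _a : Fin d, ∑ _b : Fin d, c₀ :=
          Finset.sum_le_sum (fun a _ => Finset.sum_le_sum (fun b _ => key a b))
      _ = (d:ℝ)^2 * c₀ := by
          simp only [Finset.sum_const, Finset.card_univ, Fintype.card_fin,
            Fintype.card_prod, nsmul_eq_mul]
          push_cast; ring
  -- combine
  have htr : (M₀.trace).re + (M₁.trace).re = (d:ℝ)^2 := by
    have h' : M₀.trace + M₁.trace = ((d * d : ℕ) : ℂ) := by
      rw [← Matrix.trace_add, hsum, Matrix.trace_one]
      simp [Finset.card_univ]
    have h2 := congrArg Complex.re h'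
    rw [Complex.add_re, Complex.natCast_re] at h2
    rw [h2]; push_cast; ring
  have hd2 : (0:ℝ) < (d:ℝ)^2 := by positivity
  nlinarith [part1, part2]
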